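/- arXiv:2412.10082 — 3 statements merged into one kernel-verified Lean document; each statement's English description precedes it below -/
import Mathlib

section
/- Let G be a finite simple graph, R ⊆ V(G) a clique modulator (i.e., V(G)∖R is a clique), and γ the Grundy number of G. Then there exists a Grundy coloring (C_1, …, C_γ) of G and an index i such that C_j ∩ R ≠ ∅ for all j ≤ i, while for all j > i, C_j ∩ R = ∅ and |C_j| = 1. -/
variable {V : Type*} [Fintype V] [DecidableEq V]

/-- A Grundy coloring of the vertex set `X` of `G`: an ordered partition of `X`
into nonempty independent sets such that every vertex of the `i`-th class has a
neighbor in every earlier class. -/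
def GrundyColoringOn (G : SimpleGraph V) (X : Finset V) (C : List (Finset V)) : Prop :=
  (∀ A ∈ C, A.Nonempty) ∧
  C.Pairwise Disjoint ∧
  (∀ v, v ∈ X ↔ ∃ A ∈ C, v ∈ A) ∧
  (∀ A ∈ C, ∀ u ∈ A, ∀ w ∈ A, ¬ G.Adj u w) ∧
  (∀ i j : ℕ, ∀ hi : i < C.length, ∀ hj : j < C.length, j < i →
     ∀ v ∈ C.get ⟨i, hi⟩, ∃ u ∈ C.get ⟨j, hj⟩, G.Adj u v)

/-- The set of lengths of Grundy colorings of `X` in `G`; its greatest element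
is the Grundy number of the induced subgraph `G[X]`. -/
def grundySet (G : SimpleGraph V) (X : Finset V) : Set ℕ :=
  {n | ∃ C : List (Finset V), GrundyColoringOn G X C ∧ C.length = n}

/-!
Take any Grundy coloring of maximum length and move the classes that meet `R` to the front,
keeping the relative order inside both groups. A class avoiding `R` lies in the clique
`V ∖ R` and is independent, so it is a single vertex `x`. If `x` came before a class `A`
meeting `R`, every vertex of `A` is adjacent to `x`, so `x` still has a neighbour in `A`
once `A` is moved in front of it; all other pairs of classes keep their relative order.
-/

section Lists

variable {α : Type*}

theorem List.Pairwise.filter_append_filter_not {r : α → α → Prop} {p : α → Bool}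
    {l : List α} (hl : l.Pairwise r)
    (hswap : ∀ a ∈ l, ∀ b ∈ l, p a → p b = false → r b a → r a b) :
    (l.filter p ++ l.filter (fun a => !p a)).Pairwise r := by
  let comparable : α → α → Prop := fun a b => r a b ∨ r b a
  have : Std.Symm comparable := ⟨fun _ _ => Or.symm⟩
  have hcomparable : l.Pairwise comparable := hl.imp Or.inl
  refine List.pairwise_append.2 ⟨hl.sublist List.filter_sublist,
    hl.sublist List.filter_sublist, fun a ha b hb => ?_⟩
  obtain ⟨ha, hpa⟩ := List.mem_filter.1 ha
  obtain ⟨hb, hpb⟩ := List.mem_filter.1 hb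
  have hpb : p b = false := by simpa using hpb
  have hab : a ≠ b := by rintro rfl; simp [hpa] at hpb
  exact (hcomparable.forall ha hb hab).elim id (hswap a ha b hb hpa hpb)

theorem List.getElem_append_mem_left {l₁ l₂ : List α} {j : ℕ}
    (hj : j < (l₁ ++ l₂).length) (h : j < l₁.length) : (l₁ ++ l₂)[j] ∈ l₁ := by
  rw [List.getElem_append_left h]
  exact List.getElem_mem _

theorem List.getElem_append_mem_right {l₁ l₂ : List α} {j : ℕ}
    (hj : j < (l₁ ++ l₂).length) (h : l₁.length ≤ j) : (l₁ ++ l₂)[j] ∈ l₂ := by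
  rw [List.getElem_append_right h]
  exact List.getElem_mem _

end Lists

section Dominates

variable {α : Type*} (G : SimpleGraph α)

def SimpleGraph.Dominates (A B : Finset α) : Prop :=
  ∀ v ∈ B, ∃ u ∈ A, G.Adj u v

variable {G}

theorem SimpleGraph.Dominates.singleton_of_nonempty {A : Finset α} {x : α}
    (h : G.Dominates {x} A) (hA : A.Nonempty) : G.Dominates A {x} := by
  obtain ⟨w, hw⟩ := hA
  obtain ⟨u, hu, hux⟩ := h w hw
  rw [Finset.mem_singleton] at hu
  subst hu
  intro v hv
  rw [Finset.mem_singleton.1 hv]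
  exact ⟨w, hw, hux.symm⟩

theorem SimpleGraph.IsClique.card_eq_one_of_subset {S : Set α} {A : Finset α}
    (hS : G.IsClique S) (hAS : ↑A ⊆ S) (hind : ∀ u ∈ A, ∀ w ∈ A, ¬ G.Adj u w)
    (hA : A.Nonempty) : A.card = 1 := by
  refine le_antisymm (Finset.card_le_one.2 fun u hu w hw => ?_) hA.card_pos
  by_contra huw
  exact hind u hu w hw (hS (hAS hu) (hAS hw) huw)

end Dominates

namespace GrundyColoringOn

variable {α : Type*} {G : SimpleGraph α} {X : Finset α} {C : List (Finset α)}

theorem pairwise_dominates (hC : GrundyColoringOn G X C) : C.Pairwise G.Dominates :=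
  List.pairwise_iff_get.2 fun i j hij v hv => hC.2.2.2.2 j i j.isLt i.isLt hij v hv

theorem of_perm {C' : List (Finset α)} (hC : GrundyColoringOn G X C) (hperm : C'.Perm C)
    (hdom : C'.Pairwise G.Dominates) : GrundyColoringOn G X C' := by
  obtain ⟨hne, hdisj, hcover, hind, -⟩ := hC
  refine ⟨fun A hA => hne A (hperm.mem_iff.1 hA), (hperm.pairwise_iff fun h => h.symm).2 hdisj,
    fun v => ?_, fun A hA => hind A (hperm.mem_iff.1 hA), ?_⟩
  · simp only [hcover v, hperm.mem_iff]
  · intro i j hi hj hji v hv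
    exact List.pairwise_iff_get.1 hdom ⟨j, hj⟩ ⟨i, hi⟩ hji v hv

theorem card_eq_one_of_inter_eq_empty [Fintype α] [DecidableEq α] {R A : Finset α}
    (hC : GrundyColoringOn G X C) (hclique : G.IsClique ↑(Finset.univ \ R)) (hA : A ∈ C)
    (hAR : A ∩ R = ∅) : A.card = 1 := by
  refine hclique.card_eq_one_of_subset (fun v hv => ?_) (hC.2.2.2.1 A hA) (hC.1 A hA)
  simpa using Finset.disjoint_left.1 (Finset.disjoint_iff_inter_eq_empty.2 hAR) hv

end GrundyColoringOn

theorem stmt5 (G : SimpleGraph V) (R : Finset V)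
    (hclique : G.IsClique ↑(Finset.univ \ R)) (γ : ℕ)
    (hγ : IsGreatest (grundySet G Finset.univ) γ) :
    ∃ C : List (Finset V), GrundyColoringOn G Finset.univ C ∧ C.length = γ ∧
      ∃ i, ∀ j, ∀ hj : j < C.length,
        (j < i → ((C.get ⟨j, hj⟩) ∩ R).Nonempty) ∧
        (i ≤ j → (C.get ⟨j, hj⟩) ∩ R = ∅ ∧ (C.get ⟨j, hj⟩).card = 1) := by
  obtain ⟨C, hC, rfl⟩ := hγ.1
  let p : Finset V → Bool := fun A => (A ∩ R).Nonempty
  have hsingleton : ∀ B ∈ C, p B = false → ∃ x, B = {x} := fun B hB hpB =>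
    Finset.card_eq_one.1 <|
      hC.card_eq_one_of_inter_eq_empty hclique hB (by simpa [p] using hpB)
  have hswap : ∀ A ∈ C, ∀ B ∈ C, p A → p B = false → G.Dominates B A → G.Dominates A B := by
    intro A _ B hB hpA hpB hBA
    obtain ⟨x, rfl⟩ := hsingleton B hB hpB
    exact hBA.singleton_of_nonempty ((by simpa [p] using hpA : (A ∩ R).Nonempty).mono
      Finset.inter_subset_left)
  have hperm := List.filter_append_perm p C
  refine ⟨_, hC.of_perm hperm (hC.pairwise_dominates.filter_append_filter_not hswap),
    hperm.length_eq, (C.filter p).length, fun j hj => ⟨fun hlt => ?_, fun hle => ?_⟩⟩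
  · simpa [p] using (List.mem_filter.1 (List.getElem_append_mem_left hj hlt)).2
  · obtain ⟨hA, hpA⟩ := List.mem_filter.1 (List.getElem_append_mem_right hj hle)
    have hAR : (C.filter p ++ C.filter (fun A => !p A))[j] ∩ R = ∅ := by
      simpa [p] using hpA
    exact ⟨hAR, hC.card_eq_one_of_inter_eq_empty hclique hA hAR⟩
end

section
/- Let G be a graph with a clique modulator R of size r. Then the Grundy number of G can be computed by an algorithm examining a subgraph on at most r + r·2^r vertices; in particular, there is a vertex subset W ⊆ V(G) of size at most r + r·2^r containing R such that the Grundy number of G equals the Grundy number of G[W] plus |V(G)∖W|. -/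
variable {V : Type*} [Fintype V] [DecidableEq V]

/-!
Write `K = V \ R` for the clique. Two vertices of `K` with the same neighbourhood in `R` are
true twins, so swapping them is an automorphism of `G`. Let `W` consist of `R` together with,
for every `S ⊆ R`, up to `r` vertices of `K` whose neighbourhood in `R` is `S`. Adding to a set
`X ⊇ W` a vertex `x ∉ W` raises the Grundy number by exactly one, because `X` contains `r` twins
of `x`. Both inequalities come from one count: a vertex `α ∈ R` of some class that is
non-adjacent to `r` twins lying in earlier classes has a neighbour in `R` in each of these
(pairwise distinct) classes, which together with `α` gives `r + 1` vertices of `R`. So no class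
misses `x` (append `{x}` as a last class), and conversely the last class of a Grundy coloring
of `X ∪ {x}` that meets the twins of `x` is a singleton `{z}`: deleting it and swapping `x`
with `z` leaves a Grundy coloring of `X` with one class less. Induct over `V \ W`.
-/

theorem List.exists_last_eq_append_cons {α : Type*} {p : α → Prop} :
    ∀ {l : List α}, (∃ a ∈ l, p a) → ∃ l₁ a l₂, l = l₁ ++ a :: l₂ ∧ p a ∧ ∀ b ∈ l₂, ¬ p b
  | [], h => by simp at h
  | b :: l, h => by
    by_cases hl : ∃ a ∈ l, p a
    · obtain ⟨l₁, a, l₂, rfl, ha, hl₂⟩ := List.exists_last_eq_append_cons hl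
      exact ⟨b :: l₁, a, l₂, rfl, ha, hl₂⟩
    · push Not at hl
      obtain ⟨a, ha, hpa⟩ := h
      rcases List.mem_cons.1 ha with rfl | ha
      · exact ⟨[], a, l, rfl, hpa, hl⟩
      · exact absurd hpa (hl a ha)

theorem Finset.map_swap_erase_insert {α : Type*} [DecidableEq α] {s : Finset α} {x z : α}
    (hx : x ∉ s) (hz : z ∈ insert x s) :
    ((insert x s).erase z).map (Equiv.swap x z).toEmbedding = s := by
  ext y
  rw [Finset.mem_map_equiv, Equiv.symm_swap, Finset.mem_erase, Finset.mem_insert]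
  rcases eq_or_ne y x with rfl | hyx
  · simp [hx]
  rcases eq_or_ne y z with rfl | hyz
  · simp only [Equiv.swap_apply_right, ne_eq, true_or, and_true]
    exact iff_of_true (Ne.symm hyx) ((Finset.mem_insert.1 hz).resolve_left hyx)
  · simp [Equiv.swap_apply_of_ne_of_ne hyx hyz, hyz, hyx]

section

omit [Fintype V] [DecidableEq V]

variable {G : SimpleGraph V} {R X : Finset V} {C : List (Finset V)}

theorem grundyColoringOn_iff :
    GrundyColoringOn G X C ↔
      (∀ A ∈ C, A.Nonempty) ∧ C.Pairwise Disjoint ∧ (∀ v, v ∈ X ↔ ∃ A ∈ C, v ∈ A) ∧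
      (∀ A ∈ C, ∀ u ∈ A, ∀ w ∈ A, ¬ G.Adj u w) ∧
      C.Pairwise (fun A B => ∀ v ∈ B, ∃ u ∈ A, G.Adj u v) := by
  rw [GrundyColoringOn, List.pairwise_iff_get (R := fun A B => ∀ v ∈ B, ∃ u ∈ A, G.Adj u v)]
  constructor <;> rintro ⟨h₁, h₂, h₃, h₄, h₅⟩ <;> refine ⟨h₁, h₂, h₃, h₄, ?_⟩
  · exact fun i j hij => h₅ j i j.2 i.2 hij
  · exact fun i j hi hj hji => h₅ ⟨j, hj⟩ ⟨i, hi⟩ hji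

namespace GrundyColoringOn

theorem append_singleton [DecidableEq V] {x : V} (hC : GrundyColoringOn G X C) (hx : x ∉ X)
    (hadj : ∀ A ∈ C, ∃ u ∈ A, G.Adj u x) :
    GrundyColoringOn G (insert x X) (C ++ [{x}]) := by
  obtain ⟨h₁, h₂, h₃, h₄, h₅⟩ := grundyColoringOn_iff.1 hC
  have hxC : ∀ A ∈ C, x ∉ A := fun A hA hxA => hx ((h₃ x).2 ⟨A, hA, hxA⟩)
  refine grundyColoringOn_iff.2 ⟨?_, ?_, ?_, ?_, ?_⟩
  · simpa [or_imp, forall_and] using h₁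
  · simpa [List.pairwise_append, h₂] using hxC
  · intro v
    simp [h₃, or_comm]
  · simpa [or_imp, forall_and] using h₄
  · simpa [List.pairwise_append, h₅] using hadj

theorem erase_class {l₁ l₂ : List (Finset V)} {A : Finset V} [DecidableEq V]
    (hC : GrundyColoringOn G X (l₁ ++ A :: l₂)) : GrundyColoringOn G (X \ A) (l₁ ++ l₂) := by
  obtain ⟨h₁, h₂, h₃, h₄, h₅⟩ := grundyColoringOn_iff.1 hC
  have hsub : (l₁ ++ l₂).Sublist (l₁ ++ A :: l₂) := (List.sublist_cons_self A l₂).append_left l₁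
  have hdisj : ∀ B ∈ l₁ ++ l₂, Disjoint A B := by
    simp only [List.pairwise_append, List.pairwise_cons] at h₂
    simp only [List.mem_append]
    rintro B (hB | hB)
    · exact (h₂.2.2 B hB A List.mem_cons_self).symm
    · exact h₂.2.1.1 B hB
  refine grundyColoringOn_iff.2 ⟨fun B hB => h₁ B (hsub.subset hB), h₂.sublist hsub, ?_,
    fun B hB => h₄ B (hsub.subset hB), h₅.sublist hsub⟩
  intro v
  rw [Finset.mem_sdiff, h₃]
  constructor
  · rintro ⟨⟨B, hB, hvB⟩, hvA⟩
    refine ⟨B, ?_, hvB⟩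
    simp only [List.mem_append, List.mem_cons] at hB ⊢
    rcases hB with hB | rfl | hB
    exacts [Or.inl hB, absurd hvB hvA, Or.inr hB]
  · rintro ⟨B, hB, hvB⟩
    exact ⟨⟨B, hsub.subset hB, hvB⟩, fun hvA => Finset.disjoint_left.1 (hdisj B hB) hvA hvB⟩

theorem map {V' : Type*} {G' : SimpleGraph V'} (φ : G ↪g G') (hC : GrundyColoringOn G X C) :
    GrundyColoringOn G' (X.map φ.toEmbedding) (C.map (Finset.map φ.toEmbedding)) := by
  obtain ⟨h₁, h₂, h₃, h₄, h₅⟩ := grundyColoringOn_iff.1 hC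
  refine grundyColoringOn_iff.2 ⟨?_, ?_, ?_, ?_, ?_⟩
  · simpa using h₁
  · simpa [List.pairwise_map] using h₂
  · intro v
    constructor
    · intro hv
      obtain ⟨a, haX, rfl⟩ := Finset.mem_map.1 hv
      obtain ⟨A, hA, haA⟩ := (h₃ a).1 haX
      exact ⟨_, List.mem_map_of_mem hA, Finset.mem_map_of_mem _ haA⟩
    · rintro ⟨B, hB, hvB⟩
      obtain ⟨A, hA, rfl⟩ := List.mem_map.1 hB
      obtain ⟨a, haA, rfl⟩ := Finset.mem_map.1 hvB
      exact Finset.mem_map_of_mem _ ((h₃ a).2 ⟨A, hA, haA⟩)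
  · simpa using h₄
  · simpa [List.pairwise_map] using h₅

end GrundyColoringOn

def IsTwinOutside (G : SimpleGraph V) (R : Finset V) (u x : V) : Prop :=
  u ∉ R ∧ ∀ ρ ∈ R, (G.Adj u ρ ↔ G.Adj x ρ)

def SimpleGraph.swapIso (G : SimpleGraph V) {x z : V}
    (h : ∀ w, w ≠ x → w ≠ z → (G.Adj x w ↔ G.Adj z w)) : G ≃g G where
  toEquiv := Equiv.swap x z
  map_rel_iff' := by
    intro a b
    simp only [Equiv.swap_apply_def]
    split_ifs <;> subst_vars <;> grind [SimpleGraph.adj_comm, SimpleGraph.irrefl]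

theorem IsTwinOutside.adj_iff (hK : G.IsClique (↑R)ᶜ) {x z w : V} (hz : IsTwinOutside G R z x)
    (hx : x ∉ R) (hwx : w ≠ x) (hwz : w ≠ z) : G.Adj x w ↔ G.Adj z w := by
  by_cases hw : w ∈ R
  · exact (hz.2 w hw).symm
  · exact iff_of_true (hK hx hw hwx.symm) (hK hz.1 hw hwz.symm)

theorem card_lt_card_of_forall_exists_adj (hK : G.IsClique (↑R)ᶜ) {l : List (Finset V)}
    (hdisj : l.Pairwise Disjoint) (hind : ∀ B ∈ l, ∀ u ∈ B, ∀ w ∈ B, ¬ G.Adj u w)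
    {α : V} (hαR : α ∈ R) (hα : ∀ B ∈ l, ∃ y ∈ B, G.Adj y α) {D : Finset V}
    (hD : ∀ u ∈ D, u ∉ R ∧ ¬ G.Adj u α ∧ ∃ B ∈ l, u ∈ B) :
    D.card < R.card := by
  classical
  have hpick : ∀ u ∈ D, ∃ y ∈ R, G.Adj y α ∧ ∃ B ∈ l, u ∈ B ∧ y ∈ B := by
    intro u hu
    obtain ⟨huR, huα, B, hB, huB⟩ := hD u hu
    obtain ⟨y, hyB, hyα⟩ := hα B hB
    refine ⟨y, ?_, hyα, B, hB, huB, hyB⟩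
    by_contra hyR
    exact hind B hB y hyB u huB (hK hyR huR (by rintro rfl; exact huα hyα))
  choose! f hfR hfα hfB using hpick
  have hinj : Set.InjOn f D := by
    intro u hu v hv huv
    obtain ⟨B, hB, huB, hfuB⟩ := hfB u hu
    obtain ⟨B', hB', hvB', hfvB'⟩ := hfB v hv
    obtain rfl : B = B' := by
      by_contra hne
      exact Finset.disjoint_left.1 (hdisj.forall hB hB' hne) hfuB (huv ▸ hfvB')
    by_contra hne
    exact hind B hB u huB v hvB' (hK (hD u hu).1 (hD v hv).1 hne)
  have hα_notMem : α ∉ D.image f := by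
    simp only [Finset.mem_image, not_exists, not_and]
    exact fun u hu hfu => G.loopless.irrefl α (hfu ▸ hfα u hu)
  calc D.card < (insert α (D.image f)).card := by
        rw [Finset.card_insert_of_notMem hα_notMem, Finset.card_image_of_injOn hinj]
        exact Nat.lt_succ_self _
    _ ≤ R.card := Finset.card_le_card (Finset.insert_subset hαR (Finset.image_subset_iff.2 hfR))

namespace GrundyColoringOn

theorem forall_exists_adj_of_twins (hK : G.IsClique (↑R)ᶜ) (hC : GrundyColoringOn G X C)
    {x : V} {T : Finset V} (hxR : x ∉ R) (hx : x ∉ X) (hTX : T ⊆ X)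
    (hT : ∀ u ∈ T, IsTwinOutside G R u x) (hRT : R.card ≤ T.card) :
    ∀ A ∈ C, ∃ u ∈ A, G.Adj u x := by
  obtain ⟨h₁, h₂, h₃, h₄, h₅⟩ := grundyColoringOn_iff.1 hC
  intro A hA
  by_contra hA'
  push Not at hA'
  have hAR : ∀ w ∈ A, w ∈ R := fun w hwA => by
    by_contra hwR
    refine hA' w hwA (hK hwR hxR ?_)
    rintro rfl
    exact hx ((h₃ w).2 ⟨A, hA, hwA⟩)
  obtain ⟨α, hα⟩ := h₁ A hA
  obtain ⟨l₁, l₂, rfl⟩ := List.append_of_mem hA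
  have hcount := card_lt_card_of_forall_exists_adj hK (l := l₁) (D := T)
    (h₂.sublist (List.sublist_append_left _ _)) (fun B hB => h₄ B (by simp [hB])) (hAR α hα)
    (fun B hB => (List.pairwise_append.1 h₅).2.2 B hB A List.mem_cons_self α hα) ?_
  · omega
  intro u huT
  obtain ⟨huR, hutr⟩ := hT u huT
  have hux : ∀ w ∈ A, ¬ G.Adj u w := fun w hwA huw =>
    hA' w hwA ((hutr w (hAR w hwA)).1 huw).symm
  refine ⟨huR, hux α hα, ?_⟩
  obtain ⟨B, hB, huB⟩ := (h₃ u).1 (hTX huT)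
  simp only [List.mem_append, List.mem_cons] at hB
  rcases hB with hB | rfl | hB
  · exact ⟨B, hB, huB⟩
  · exact absurd (hAR u huB) huR
  · obtain ⟨w, hwA, hwu⟩ := (List.pairwise_cons.1 (List.pairwise_append.1 h₅).2.1).1 B hB u huB
    exact (hux w hwA hwu.symm).elim

theorem exists_eq_append_singleton_cons_of_twins (hK : G.IsClique (↑R)ᶜ)
    (hC : GrundyColoringOn G X C) {x : V} {Q : Finset V} (hQX : Q ⊆ X)
    (hQ : ∀ u ∈ Q, IsTwinOutside G R u x) (hRQ : R.card < Q.card) :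
    ∃ l₁ z l₂, C = l₁ ++ {z} :: l₂ ∧ z ∈ Q := by
  classical
  obtain ⟨h₁, h₂, h₃, h₄, h₅⟩ := grundyColoringOn_iff.1 hC
  obtain ⟨q, hq⟩ : Q.Nonempty := Finset.card_pos.1 (by omega)
  obtain ⟨A, hA, hqA⟩ := (h₃ q).1 (hQX hq)
  obtain ⟨l₁, A, l₂, rfl, ⟨z, hzA, hzQ⟩, hl₂⟩ :=
    List.exists_last_eq_append_cons (p := fun A => ∃ z ∈ A, z ∈ Q) ⟨A, hA, q, hqA, hq⟩
  refine ⟨l₁, z, l₂, ?_, hzQ⟩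
  rw [Finset.eq_singleton_iff_unique_mem.2 ⟨hzA, fun w hwA => ?_⟩]
  by_contra hwz
  have hAind := h₄ A (by simp)
  have hwR : w ∈ R := by
    by_contra hwR
    exact hAind w hwA z hzA (hK hwR (hQ z hzQ).1 hwz)
  have hcount := card_lt_card_of_forall_exists_adj hK (l := l₁) (D := Q.erase z)
    (h₂.sublist (List.sublist_append_left _ _)) (fun B hB => h₄ B (by simp [hB])) hwR
    (fun B hB => (List.pairwise_append.1 h₅).2.2 B hB A List.mem_cons_self w hwA) ?_
  · rw [Finset.card_erase_of_mem hzQ] at hcount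
    omega
  intro u hu
  obtain ⟨huz, huQ⟩ := Finset.mem_erase.1 hu
  obtain ⟨huR, hutr⟩ := hQ u huQ
  refine ⟨huR, fun huw => hAind z hzA w hwA (((hQ z hzQ).2 w hwR).2 ((hutr w hwR).1 huw)), ?_⟩
  obtain ⟨B, hB, huB⟩ := (h₃ u).1 (hQX huQ)
  simp only [List.mem_append, List.mem_cons] at hB
  rcases hB with hB | rfl | hB
  · exact ⟨B, hB, huB⟩
  · exact (hAind u huB z hzA (hK huR (hQ z hzQ).1 huz)).elim
  · exact (hl₂ B hB ⟨u, huB, huQ⟩).elim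

theorem exists_of_insert_twin [DecidableEq V] (hK : G.IsClique (↑R)ᶜ) {x : V} {T : Finset V}
    (hC : GrundyColoringOn G (insert x X) C) (hxR : x ∉ R) (hx : x ∉ X) (hTX : T ⊆ X)
    (hT : ∀ u ∈ T, IsTwinOutside G R u x) (hRT : R.card ≤ T.card) :
    ∃ C', GrundyColoringOn G X C' ∧ C.length = C'.length + 1 := by
  have hQ : ∀ u ∈ insert x T, IsTwinOutside G R u x :=
    Finset.forall_mem_insert _ _ _ |>.2 ⟨⟨hxR, fun _ _ => Iff.rfl⟩, hT⟩
  have hxT : x ∉ T := fun h => hx (hTX h)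
  obtain ⟨l₁, z, l₂, rfl, hz⟩ := hC.exists_eq_append_singleton_cons_of_twins hK
    (Finset.insert_subset_insert x hTX) hQ (by rw [Finset.card_insert_of_notMem hxT]; omega)
  let σ := SimpleGraph.swapIso G fun w hwx hwz =>
    (hQ z hz).adj_iff hK hxR hwx hwz
  have hC' := hC.erase_class.map σ.toEmbedding
  rw [Finset.sdiff_singleton_eq_erase, show σ.toEmbedding.toEmbedding = (Equiv.swap x z).toEmbedding
    from rfl, Finset.map_swap_erase_insert hx (Finset.insert_subset_insert x hTX hz)] at hC'
  exact ⟨_, hC', by simp only [List.length_map, List.length_append, List.length_cons]; omega⟩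

end GrundyColoringOn

theorem isGreatest_grundySet_insert_twin [DecidableEq V] (hK : G.IsClique (↑R)ᶜ) {x : V}
    {T : Finset V} (hxR : x ∉ R) (hx : x ∉ X) (hTX : T ⊆ X)
    (hT : ∀ u ∈ T, IsTwinOutside G R u x) (hRT : R.card ≤ T.card) {n : ℕ}
    (hn : IsGreatest (grundySet G X) n) : IsGreatest (grundySet G (insert x X)) (n + 1) := by
  obtain ⟨⟨C, hC, rfl⟩, hmax⟩ := hn
  refine ⟨⟨C ++ [{x}], hC.append_singleton hx
    (hC.forall_exists_adj_of_twins hK hxR hx hTX hT hRT), by simp⟩, ?_⟩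
  rintro _ ⟨D, hD, rfl⟩
  obtain ⟨D', hD', hlen⟩ := hD.exists_of_insert_twin hK hxR hx hTX hT hRT
  have := hmax ⟨D', hD', rfl⟩
  omega

theorem isGreatest_grundySet_union [DecidableEq V] (hK : G.IsClique (↑R)ᶜ) {W : Finset V}
    (hRW : R ⊆ W)
    (hW : ∀ x ∉ W, ∃ T ⊆ W, R.card ≤ T.card ∧ ∀ u ∈ T, IsTwinOutside G R u x)
    {n : ℕ} (hn : IsGreatest (grundySet G W) n) (s : Finset V) (hs : Disjoint W s) :
    IsGreatest (grundySet G (W ∪ s)) (n + s.card) := by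
  induction s using Finset.induction_on with
  | empty => simpa using hn
  | insert x s hxs ih =>
    rw [Finset.disjoint_insert_right] at hs
    obtain ⟨T, hTW, hRT, hT⟩ := hW x hs.1
    rw [Finset.union_insert, Finset.card_insert_of_notMem hxs, ← add_assoc]
    exact isGreatest_grundySet_insert_twin hK (fun h => hs.1 (hRW h)) (by simp [hs.1, hxs])
      (hTW.trans Finset.subset_union_left) hT hRT (ih hs.2)

end

theorem exists_twin_representatives (G : SimpleGraph V) (R : Finset V) :
    ∃ W, R ⊆ W ∧ W.card ≤ R.card + R.card * 2 ^ R.card ∧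
      ∀ x ∉ W, ∃ T ⊆ W, R.card ≤ T.card ∧ ∀ u ∈ T, IsTwinOutside G R u x := by
  classical
  let cls : Finset V → Finset V := fun S => {u | u ∉ R ∧ R.filter (G.Adj u) = S}
  choose T hTcls hTcard using fun S =>
    Finset.exists_subset_card_eq (s := cls S) (min_le_right R.card _)
  refine ⟨R ∪ R.powerset.biUnion T, Finset.subset_union_left, ?_, fun x hx => ?_⟩
  · calc (R ∪ R.powerset.biUnion T).card ≤ R.card + ∑ S ∈ R.powerset, (T S).card :=
          (Finset.card_union_le _ _).trans (by gcongr; exact Finset.card_biUnion_le)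
      _ ≤ R.card + ∑ S ∈ R.powerset, R.card :=
          add_le_add_right (Finset.sum_le_sum fun S _ => (hTcard S).trans_le (min_le_left _ _)) _
      _ = R.card + R.card * 2 ^ R.card := by simp [mul_comm]
  · have hxR : x ∉ R := fun h => hx (Finset.subset_union_left h)
    set S := R.filter (G.Adj x)
    have hTW : T S ⊆ R ∪ R.powerset.biUnion T := Finset.subset_union_right.trans'
      (Finset.subset_biUnion_of_mem T (Finset.mem_powerset.2 (Finset.filter_subset _ _)))
    refine ⟨T S, hTW, ?_, fun u hu => ?_⟩
    · by_contra hlt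
      have := hTcard S
      have hTS : T S = cls S := Finset.eq_of_subset_of_card_le (hTcls S) (by omega)
      have hxcls : x ∈ cls S := by simp [cls, S, hxR]
      exact hx (hTW (hTS ▸ hxcls))
    · obtain ⟨huR, hutr⟩ : u ∉ R ∧ R.filter (G.Adj u) = S := by simpa [cls] using hTcls S hu
      refine ⟨huR, fun ρ hρ => ?_⟩
      simpa [S, hρ] using Finset.ext_iff.1 hutr ρ

theorem stmt10 (G : SimpleGraph V) (R : Finset V) (r : ℕ)
    (hr : R.card = r) (hclique : G.IsClique ↑(Finset.univ \ R)) :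
    ∃ W : Finset V, R ⊆ W ∧ W.card ≤ r + r * 2 ^ r ∧
      ∀ γ γ' : ℕ, IsGreatest (grundySet G Finset.univ) γ →
        IsGreatest (grundySet G W) γ' →
        γ = γ' + (Finset.univ \ W).card := by
  obtain ⟨W, hRW, hWcard, hW⟩ := exists_twin_representatives G R
  refine ⟨W, hRW, hr ▸ hWcard, fun γ γ' hγ hγ' => ?_⟩
  have hK : G.IsClique (↑R)ᶜ := by simpa [Set.compl_eq_univ_sdiff] using hclique
  have h := isGreatest_grundySet_union hK hRW hW hγ' (Finset.univ \ W) disjoint_sdiff_self_right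
  rw [Finset.union_sdiff_of_subset (Finset.subset_univ W)] at h
  exact hγ.unique h
end

section
/- Let G be a graph with a k-cluster modulator R of size r (so G − R is a disjoint union of k cliques S_1, …, S_k). Then the Grundy number of G equals γ′ + max_{i=1..k} |S_i ∖ Q| for any set Q ⊆ V(G)∖R and any extendable Grundy coloring (C′_1, …, C′_{γ′}) of G[Q ∪ R], where extendable means that (C′_1, …, C′_{γ′}) is a subsequence of some optimal Grundy coloring of G whose remaining color classes consist solely of vertices of V(G)∖(R ∪ Q). -/
/-!
Take an optimal Grundy coloring `C` of `G` containing `C'` as a subsequence, and let `𝒜` be the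
set of its other classes, so that the Grundy number is `|C'| + |𝒜|`. Every vertex of `S i ∖ Q`
lies in a class of `𝒜`, and the vertices of a clique lie in distinct classes, so
`|S i ∖ Q| ≤ |𝒜|`. Conversely, pick a vertex `v` in the last class of `𝒜`; it lies in some
`S i ∖ Q`. Every earlier class of `𝒜` contains a neighbour of `v` outside `R ∪ Q`, and since
there are no edges between distinct cliques this neighbour is in `S i ∖ Q` too. The classes
being disjoint, `|𝒜| ≤ |S i ∖ Q|`.
-/

variable {V : Type*} [Fintype V] [DecidableEq V]

open Finset

theorem List.Sublist.length_eq_length_add_card_sdiff {α : Type*} [DecidableEq α] {l' l : List α}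
    (h : l'.Sublist l) (hl : l.Nodup) : l.length = l'.length + #(l.toFinset \ l'.toFinset) := by
  have hsub : l'.toFinset ⊆ l.toFinset := fun a ha =>
    List.mem_toFinset.2 (h.subset (List.mem_toFinset.1 ha))
  rw [← List.toFinset_card_of_nodup hl, ← List.toFinset_card_of_nodup (h.nodup hl),
    ← card_sdiff_add_card_eq_card hsub, add_comm]

namespace SimpleGraph

variable {α : Type*} {G : SimpleGraph α}

theorem IsClique.card_le_card_of_forall_exists_mem {K : Finset α} {𝒜 : Finset (Finset α)}
    (hK : G.IsClique (K : Set α)) (hind : ∀ A ∈ 𝒜, G.IsIndepSet (A : Set α))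
    (hcov : ∀ v ∈ K, ∃ A ∈ 𝒜, v ∈ A) : #K ≤ #𝒜 := by
  refine card_le_card_of_forall_subsingleton (fun v A => v ∈ A) hcov ?_
  rintro A hA u ⟨hu, huA⟩ w ⟨hw, hwA⟩
  by_contra huw
  exact hind A hA huA hwA huw (hK hu hw huw)

end SimpleGraph

theorem Finset.card_le_card_of_pairwiseDisjoint_of_forall_exists_mem {α : Type*}
    {T : Finset α} {𝒜 : Finset (Finset α)}
    (hdisj : (𝒜 : Set (Finset α)).PairwiseDisjoint id)
    (hmeet : ∀ A ∈ 𝒜, ∃ v ∈ T, v ∈ A) : #𝒜 ≤ #T := by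
  refine card_le_card_of_forall_subsingleton (fun A v => v ∈ A) hmeet ?_
  rintro v - A ⟨hA, hvA⟩ B ⟨hB, hvB⟩
  by_contra hAB
  exact disjoint_left.mp (hdisj hA hB hAB) hvA hvB

namespace GrundyColoringOn

variable {α : Type*} {G : SimpleGraph α} {X : Finset α} {C : List (Finset α)}

theorem nodup (hC : GrundyColoringOn G X C) : C.Nodup :=
  hC.2.1.imp_of_mem fun {A _} hA _ hAB hAA => by
    subst hAA
    exact (hC.1 A hA).ne_empty (disjoint_self.mp hAB)

theorem pairwiseDisjoint [DecidableEq α] (hC : GrundyColoringOn G X C) :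
    (C.toFinset : Set (Finset α)).PairwiseDisjoint id := by
  intro A hA B hB hAB
  exact hC.2.1.forall (by simpa using hA) (by simpa using hB) hAB

theorem mem_iff (hC : GrundyColoringOn G X C) (v : α) : v ∈ X ↔ ∃ A ∈ C, v ∈ A :=
  hC.2.2.1 v

theorem isIndepSet (hC : GrundyColoringOn G X C) {A : Finset α} (hA : A ∈ C) :
    G.IsIndepSet (A : Set α) :=
  fun u hu w hw _ => hC.2.2.2.1 A hA u hu w hw

theorem exists_adj_of_idxOf_lt [DecidableEq α] (hC : GrundyColoringOn G X C) {A B : Finset α}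
    (hA : A ∈ C) (hB : B ∈ C) (hAB : C.idxOf A < C.idxOf B) {v : α} (hv : v ∈ B) :
    ∃ u ∈ A, G.Adj u v := by
  have hiA := List.idxOf_lt_length_iff.mpr hA
  have hiB := List.idxOf_lt_length_iff.mpr hB
  simpa only [List.idxOf_get] using
    hC.2.2.2.2 _ _ hiB hiA hAB v (by rwa [List.idxOf_get])

theorem exists_forall_exists_mem_of_not_adj [DecidableEq α] (hC : GrundyColoringOn G X C)
    {ι : Type*} {𝒜 : Finset (Finset α)} (h𝒜 : 𝒜 ⊆ C.toFinset) (hne : 𝒜.Nonempty)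
    (S : ι → Finset α)
    (hS : ∀ A ∈ 𝒜, ∀ v ∈ A, ∃ i, v ∈ S i)
    (hsep : ∀ i j, i ≠ j → ∀ u ∈ S i, ∀ v ∈ S j, ¬ G.Adj u v) :
    ∃ i, ∀ A ∈ 𝒜, ∃ v ∈ S i, v ∈ A := by
  obtain ⟨A, hA, hlast⟩ := exists_max_image 𝒜 C.idxOf hne
  have hAC : A ∈ C := by simpa using h𝒜 hA
  obtain ⟨v, hvA⟩ := hC.1 A hAC
  obtain ⟨i, hvi⟩ := hS A hA v hvA
  refine ⟨i, fun B hB => ?_⟩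
  have hBC : B ∈ C := by simpa using h𝒜 hB
  rcases (hlast B hB).lt_or_eq with hBA | hBA
  · obtain ⟨u, huB, huv⟩ := hC.exists_adj_of_idxOf_lt hBC hAC hBA hvA
    obtain ⟨j, huj⟩ := hS B hB u huB
    obtain rfl : j = i := by_contra fun hji => hsep j i hji u huj v hvi huv
    exact ⟨u, huj, huB⟩
  · exact ⟨v, hvi, (List.idxOf_inj hBC).mp hBA ▸ hvA⟩

end GrundyColoringOn

theorem stmt16_general (G : SimpleGraph V) (R : Finset V) (k : ℕ)
    (S : Fin k → Finset V)
    (hcl : ∀ i, G.IsClique ↑(S i))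
    (hcover : Finset.univ.biUnion S = Finset.univ \ R)
    (hsep : ∀ i j, i ≠ j → ∀ u ∈ S i, ∀ v ∈ S j, ¬ G.Adj u v)
    (Q : Finset V)
    (C' : List (Finset V)) (hC' : GrundyColoringOn G (Q ∪ R) C')
    (γ : ℕ)
    (hext : ∃ C : List (Finset V), GrundyColoringOn G Finset.univ C ∧ C.length = γ ∧
      C'.Sublist C ∧ (∀ A ∈ C, A ∉ C' → ∀ v ∈ A, v ∉ R ∪ Q)) :
    γ = C'.length + Finset.univ.sup (fun i : Fin k => (S i \ Q).card) := by
  obtain ⟨C, hC, rfl, hsub, hout⟩ := hext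
  have hR : ∀ v, v ∉ R ↔ ∃ i, v ∈ S i := fun v => by
    simpa using (Finset.ext_iff.mp hcover v).symm
  rw [hsub.length_eq_length_add_card_sdiff hC.nodup, add_right_inj]
  set 𝒜 := C.toFinset \ C'.toFinset
  have h𝒜 : ∀ A ∈ 𝒜, A ∈ C ∧ A ∉ C' := by simp [𝒜]
  refine le_antisymm ?_ (Finset.sup_le fun i _ => ?_)
  · rcases 𝒜.eq_empty_or_nonempty with h | hne
    · simp only [h, card_empty, zero_le]
    obtain ⟨i, hi⟩ := hC.exists_forall_exists_mem_of_not_adj sdiff_subset hne (fun i => S i \ Q)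
      (fun A hA v hv => by simpa [hR] using hout A (h𝒜 A hA).1 (h𝒜 A hA).2 v hv)
      (fun i j hij u hu v hv => hsep i j hij u (mem_sdiff.1 hu).1 v (mem_sdiff.1 hv).1)
    calc #𝒜 ≤ #(S i \ Q) := card_le_card_of_pairwiseDisjoint_of_forall_exists_mem
          (hC.pairwiseDisjoint.subset sdiff_subset) hi
      _ ≤ _ := le_sup (f := fun i => #(S i \ Q)) (mem_univ i)
  · refine ((hcl i).subset sdiff_subset).card_le_card_of_forall_exists_mem
      (fun A hA => hC.isIndepSet (h𝒜 A hA).1) fun v hv => ?_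
    obtain ⟨hvS, hvQ⟩ := mem_sdiff.1 hv
    obtain ⟨A, hA, hvA⟩ := (hC.mem_iff v).1 (mem_univ v)
    have hvR : v ∉ R := (hR v).2 ⟨i, hvS⟩
    have hAC' : A ∉ C' := fun hAC' => by
      simpa [hvQ, hvR] using (hC'.mem_iff v).2 ⟨A, hAC', hvA⟩
    exact ⟨A, by simp [𝒜, hA, hAC'], hvA⟩

/-- For a k-cluster modulator `R` (so `G - R` is the disjoint union of cliques `S 1, …, S k`),
if a Grundy coloring of `G[Q ∪ R]` is extendable (a subsequence of some optimal Grundy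
coloring of `G` whose remaining classes consist solely of vertices outside `R ∪ Q`), then
the Grundy number of `G` equals `γ' + max_i |S i ∖ Q|`. -/
theorem stmt16 (G : SimpleGraph V) (R : Finset V) (r k : ℕ) (hr : R.card = r)
    (S : Fin k → Finset V)
    (hcl : ∀ i, G.IsClique ↑(S i))
    (hdisj : ∀ i j, i ≠ j → Disjoint (S i) (S j))
    (hcover : Finset.univ.biUnion S = Finset.univ \ R)
    (hsep : ∀ i j, i ≠ j → ∀ u ∈ S i, ∀ v ∈ S j, ¬ G.Adj u v)
    (hne : ∀ i, (S i).Nonempty)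
    (Q : Finset V) (hQ : Q ⊆ Finset.univ \ R)
    (C' : List (Finset V)) (hC' : GrundyColoringOn G (Q ∪ R) C')
    (γ : ℕ) (hγ : IsGreatest (grundySet G Finset.univ) γ)
    (hext : ∃ C : List (Finset V), GrundyColoringOn G Finset.univ C ∧ C.length = γ ∧
      C'.Sublist C ∧ (∀ A ∈ C, A ∉ C' → ∀ v ∈ A, v ∉ R ∪ Q)) :
    γ = C'.length + Finset.univ.sup (fun i : Fin k => (S i \ Q).card) :=
  stmt16_general G R k S hcl hcover hsep Q C' hC' γ hext
end
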